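/- Let h, τ > 0 and define the discrete fundamental solution e_{h,−iτ}(hm, kτ) = i H(kτ) (1 + iτ Δ_h)^{k−1} δ_h (hm) on the lattice R³_h × R⁺_τ, for k ≥ 1, where Δ_h is the star (7-point) discrete Laplacian and δ_h is the discrete delta. Then (−i ∂_τ − Δ_h) e_{h,−iτ} (hm, kτ) = δ_τ(kτ) δ_h(hm) for all lattice points, where ∂_τ is the forward time difference ∂_τ u(·, kτ) = (u(·,(k+1)τ) − u(·,kτ))/τ, δ_τ(0) = 1/τ and δ_τ(kτ) = 0 for k ≠ 0, δ_h(0) = 1/h³ and δ_h(hm) = 0 for m ≠ 0. -/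

import Mathlib

/-- The star (7-point) discrete Laplacian on the lattice `ℤ³` with mesh size `h`. -/
noncomputable def discLap (h : ℝ) (u : (Fin 3 → ℤ) → ℂ) : (Fin 3 → ℤ) → ℂ :=
  fun m => ∑ s, (u (m + Pi.single s 1) - 2 * u m + u (m - Pi.single s 1)) / (h : ℂ) ^ 2

/-- The discrete delta function `δ_h` on `ℤ³_h`. -/
noncomputable def discDelta (h : ℝ) : (Fin 3 → ℤ) → ℂ :=
  fun m => if m = 0 then 1 / (h : ℂ) ^ 3 else 0

/-- The discrete fundamental solution
`e_{h,-iτ}(hm, kτ) = i H(kτ) (1 + iτΔ_h)^{k-1} δ_h (hm)`. -/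
noncomputable def discFundSol (h τ : ℝ) : (Fin 3 → ℤ) → ℤ → ℂ := fun m k =>
  if 1 ≤ k then
    Complex.I *
      ((fun v : (Fin 3 → ℤ) → ℂ => fun m' => v m' + Complex.I * (τ : ℂ) * discLap h v m')^[(k - 1).toNat]
        (discDelta h)) m
  else 0

/-!
The fundamental solution is the explicit Euler scheme `e(k+1) = e(k) + iτ(Δ_h e(k) + δ_τ(k) δ_h)`
started from `e = 0` at times `k ≤ 0`; since `δ_τ(0) = 1/τ`, the source term is exactly the initial
value `e(1) = i δ_h`.  Solving an explicit Euler step for the difference quotient gives the equation.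
-/

open Complex

noncomputable def eulerStep (h τ : ℝ) (v : (Fin 3 → ℤ) → ℂ) : (Fin 3 → ℤ) → ℂ :=
  fun m => v m + I * τ * discLap h v m

lemma discLap_const_mul (h : ℝ) (c : ℂ) (u : (Fin 3 → ℤ) → ℂ) (m : Fin 3 → ℤ) :
    discLap h (fun m' => c * u m') m = c * discLap h u m := by
  simp only [discLap, Finset.mul_sum]
  congr 1; ext s; ring

lemma discLap_zero (h : ℝ) (m : Fin 3 → ℤ) : discLap h (fun _ => 0) m = 0 := by
  simpa using discLap_const_mul h 0 (fun _ => 0) m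

lemma discFundSol_of_lt_one {h τ : ℝ} {k : ℤ} (hk : k < 1) (m : Fin 3 → ℤ) :
    discFundSol h τ m k = 0 :=
  if_neg (not_le.mpr hk)

lemma discFundSol_of_one_le {h τ : ℝ} {k : ℤ} (hk : 1 ≤ k) (m : Fin 3 → ℤ) :
    discFundSol h τ m k = I * ((eulerStep h τ)^[(k - 1).toNat] (discDelta h)) m :=
  if_pos hk

lemma discFundSol_one (h τ : ℝ) (m : Fin 3 → ℤ) : discFundSol h τ m 1 = I * discDelta h m := by
  simp [discFundSol_of_one_le le_rfl]

lemma discFundSol_succ_of_one_le {h τ : ℝ} {k : ℤ} (hk : 1 ≤ k) (m : Fin 3 → ℤ) :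
    discFundSol h τ m (k + 1) =
      discFundSol h τ m k + I * τ * discLap h (fun m' => discFundSol h τ m' k) m := by
  have hsucc : (k + 1 - 1).toNat = (k - 1).toNat + 1 := by omega
  simp only [discFundSol_of_one_le hk, discFundSol_of_one_le (by omega : 1 ≤ k + 1), hsucc,
    Function.iterate_succ_apply', eulerStep, discLap_const_mul]
  ring

lemma discFundSol_succ {h τ : ℝ} (hτ : (τ : ℂ) ≠ 0) (k : ℤ) (m : Fin 3 → ℤ) :
    discFundSol h τ m (k + 1) = discFundSol h τ m k +
      I * τ * (discLap h (fun m' => discFundSol h τ m' k) m +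
        (if k = 0 then 1 / (τ : ℂ) else 0) * discDelta h m) := by
  rcases lt_trichotomy k 0 with hneg | rfl | hpos
  · simp [discFundSol_of_lt_one (k := k) (by omega), discFundSol_of_lt_one (k := k + 1) (by omega),
      hneg.ne, discLap_zero]
  · simp only [zero_add, discFundSol_one, discFundSol_of_lt_one zero_lt_one, discLap_zero, if_true]
    field_simp
  · simp [discFundSol_succ_of_one_le (by omega : 1 ≤ k), hpos.ne']

lemma neg_I_mul_div_sub_eq_of_eulerStep {a b c f τ : ℂ} (hτ : τ ≠ 0)
    (hstep : b = a + I * τ * (c + f)) : -I * ((b - a) / τ) - c = f := by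
  subst hstep
  field_simp
  linear_combination (-(τ * (c + f))) * I_sq

theorem stmt8_general (h τ : ℝ) (hτ : 0 < τ) (m : Fin 3 → ℤ) (k : ℤ) :
    -Complex.I * ((discFundSol h τ m (k + 1) - discFundSol h τ m k) / (τ : ℂ)) -
      discLap h (fun m' => discFundSol h τ m' k) m =
      (if k = 0 then 1 / (τ : ℂ) else 0) * (if m = 0 then 1 / (h : ℂ) ^ 3 else 0) := by
  have hτ' : (τ : ℂ) ≠ 0 := by exact_mod_cast hτ.ne'
  exact neg_I_mul_div_sub_eq_of_eulerStep hτ' (discFundSol_succ hτ' k m)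

/-- `(-i ∂_τ - Δ_h) e_{h,-iτ}(hm, kτ) = δ_τ(kτ) δ_h(hm)` for all lattice points `(m, k)`,
`k ≥ 0`, where `∂_τ` is the forward time difference. -/
theorem stmt8 (h τ : ℝ) (hh : 0 < h) (hτ : 0 < τ) (m : Fin 3 → ℤ) (k : ℤ) (hk : 0 ≤ k) :
    -Complex.I * ((discFundSol h τ m (k + 1) - discFundSol h τ m k) / (τ : ℂ)) -
      discLap h (fun m' => discFundSol h τ m' k) m =
      (if k = 0 then 1 / (τ : ℂ) else 0) * (if m = 0 then 1 / (h : ℂ) ^ 3 else 0) :=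
  stmt8_general h τ hτ m k
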